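/- Let φ: g(m) → g(n) be a morphism of Lie algebras over C[x] such that φ(H_m) = f_H·H_n, φ(X_m) = f_X·X_n, φ(Y_m) = f_Y·Y_n for polynomials f_H, f_X, f_Y ∈ C[x]. If φ is nonzero, then m ≥ n, f_H = 1, and f_X·f_Y = x^{m-n}. -/
import Mathlib


open Polynomial

/-- The bracket of the family `g(n)` on the free `ℂ[x]`-module with
basis `H = e 0`, `X = e 1`, `Y = e 2`, determined by
`[H,X] = 2X`, `[H,Y] = -2Y`, `[X,Y] = x^n • H`. -/
noncomputable def br (n : ℕ) (a b : Fin 3 → Polynomial ℂ) : Fin 3 → Polynomial ℂ :=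
  ![X ^ n * (a 1 * b 2 - a 2 * b 1),
    2 * (a 0 * b 1 - a 1 * b 0),
    (-2) * (a 0 * b 2 - a 2 * b 0)]

noncomputable def Hv : Fin 3 → Polynomial ℂ := ![1, 0, 0]
noncomputable def Xv : Fin 3 → Polynomial ℂ := ![0, 1, 0]
noncomputable def Yv : Fin 3 → Polynomial ℂ := ![0, 0, 1]

/-- If `φ : g(m) → g(n)` is a `ℂ[x]`-Lie algebra morphism with
`φ(H_m) = f_H • H_n`, `φ(X_m) = f_X • X_n`, `φ(Y_m) = f_Y • Y_n` and `φ ≠ 0`, then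
`m ≥ n`, `f_H = 1` and `f_X * f_Y = x^(m-n)`. -/
theorem morphism_constraints (m n : ℕ)
    (φ : (Fin 3 → Polynomial ℂ) →ₗ[Polynomial ℂ] (Fin 3 → Polynomial ℂ))
    (fH fX fY : Polynomial ℂ)
    (hH : φ Hv = fH • Hv) (hX : φ Xv = fX • Xv) (hY : φ Yv = fY • Yv)
    (hbr : ∀ a b, φ (br m a b) = br n (φ a) (φ b))
    (hne : φ ≠ 0) :
    n ≤ m ∧ fH = 1 ∧ fX * fY = X ^ (m - n) := by
  -- key scalar identities
  have hb1 : br m Hv Xv = (2 : Polynomial ℂ) • Xv := by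
    funext i; fin_cases i <;> simp [br, Hv, Xv]
  have hb2 : br m Hv Yv = (-2 : Polynomial ℂ) • Yv := by
    funext i; fin_cases i <;> simp [br, Hv, Yv]
  have hb3 : br m Xv Yv = (X ^ m : Polynomial ℂ) • Hv := by
    funext i; fin_cases i <;> simp [br, Xv, Yv, Hv]
  have e1 : 2 * fX = 2 * (fH * fX) := by
    have h := hbr Hv Xv
    rw [hb1, map_smul, hH, hX] at h
    have := congrFun h 1
    simpa [br, Hv, Xv, Pi.smul_apply, smul_eq_mul, mul_assoc] using this
  have e2 : (-2) * fY = (-2) * (fH * fY) := by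
    have h := hbr Hv Yv
    rw [hb2, map_smul, hH, hY] at h
    have := congrFun h 2
    simpa [br, Hv, Yv, Pi.smul_apply, smul_eq_mul, mul_assoc] using this
  have e3 : X ^ m * fH = X ^ n * (fX * fY) := by
    have h := hbr Xv Yv
    rw [hb3, map_smul, hH, hX, hY] at h
    have := congrFun h 0
    simpa [br, Hv, Xv, Yv, Pi.smul_apply, smul_eq_mul, mul_comm, mul_assoc,
      mul_left_comm] using this
  -- not all scalars vanish
  have hnz : ¬ (fH = 0 ∧ fX = 0 ∧ fY = 0) := by
    rintro ⟨h0, h1, h2⟩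
    apply hne
    apply LinearMap.ext
    intro a
    have ha : a = a 0 • Hv + a 1 • Xv + a 2 • Yv := by
      funext i; fin_cases i <;> simp [Hv, Xv, Yv]
    rw [ha]
    simp [map_add, map_smul, hH, hX, hY, h0, h1, h2]
  have hXm : (X : Polynomial ℂ) ^ m ≠ 0 := pow_ne_zero _ X_ne_zero
  have hfXY : ¬ (fX = 0 ∧ fY = 0) := by
    rintro ⟨h1, h2⟩
    apply hnz
    refine ⟨?_, h1, h2⟩
    have : X ^ m * fH = 0 := by rw [e3, h1]; ring
    exact (mul_eq_zero.mp this).resolve_left hXm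
  have hfH : fH = 1 := by
    rcases not_and_or.mp hfXY with h | h
    · have h2 : (2 : Polynomial ℂ) * (fX * (fH - 1)) = 0 := by linear_combination -e1
      have h' := (mul_eq_zero.mp h2).resolve_left two_ne_zero
      exact sub_eq_zero.mp ((mul_eq_zero.mp h').resolve_left h)
    · have h2 : (2 : Polynomial ℂ) * (fY * (fH - 1)) = 0 := by linear_combination e2
      have h' := (mul_eq_zero.mp h2).resolve_left two_ne_zero
      exact sub_eq_zero.mp ((mul_eq_zero.mp h').resolve_left h)
  have e4 : X ^ m = X ^ n * (fX * fY) := by rw [← e3, hfH, mul_one]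
  have hprod : fX * fY ≠ 0 := by
    intro h; rw [h, mul_zero] at e4; exact hXm e4
  have hnm : n ≤ m := by
    have := congrArg natDegree e4
    rw [natDegree_X_pow, natDegree_mul (pow_ne_zero _ X_ne_zero) hprod,
      natDegree_X_pow] at this
    omega
  refine ⟨hnm, hfH, ?_⟩
  have : X ^ n * (fX * fY) = X ^ n * X ^ (m - n) := by
    rw [← e4, ← pow_add]; congr 1; omega
  exact mul_left_cancel₀ (pow_ne_zero _ X_ne_zero) this
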